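/- arXiv:1306.1433 — 2 statements merged into one kernel-verified Lean document; each statement's English description precedes it below -/
import Mathlib

section
/- Let m ≥ 2 be an integer and k an integer with 2 ≤ k ≤ m − 1. Then the probability that a B(m, k/m)-distributed random variable X satisfies X ≤ k is at most 0.7152. -/
/-!
Write `F n t = P[B(n, t) ≤ k] = ∑_{j ≤ k} b_{n,j}(t)` with Bernstein polynomials `b_{n,j}`.
The value at the mean, `F n (k/n)`, does not increase with `n`. Adding a trial gives
`F (n+1) t = F n t - t b_{n,k}(t)`, while `(F (n+1))' = -(n+1) b_{n,k}` and `b_{n,k}` is maximal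
on `[0, 1]` at `k/n` (weighted AM-GM). Hence moving the parameter from `k/n` down to `k/(n+1)`
raises `F (n+1)` by at most `(n+1)(k/n - k/(n+1)) b_{n,k}(k/n) = (k/n) b_{n,k}(k/n)`, which is
exactly the loss from adding the trial. So `F m (k/m) ≤ F (k+1) (k/(k+1)) = 1 - (k/(k+1))^(k+1)`,
and `(k/(k+1))^(k+1)` increases with `k` (AM-GM again), so it is at least `8/27` for `k ≥ 2`.
-/

open Finset Polynomial

noncomputable def binomialCDF (R : Type*) [CommRing R] (n k : ℕ) : R[X] :=
  ∑ j ∈ range (k + 1), bernsteinPolynomial R n j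

section CommRing

variable {R : Type*} [CommRing R]

theorem bernsteinPolynomial_succ_zero (n : ℕ) :
    bernsteinPolynomial R (n + 1) 0 = (1 - X) * bernsteinPolynomial R n 0 := by
  simp [bernsteinPolynomial, pow_succ']

theorem bernsteinPolynomial_succ_succ (n ν : ℕ) :
    bernsteinPolynomial R (n + 1) (ν + 1) =
      X * bernsteinPolynomial R n ν + (1 - X) * bernsteinPolynomial R n (ν + 1) := by
  simp only [bernsteinPolynomial, Nat.choose_succ_succ, Nat.cast_add, Nat.add_sub_add_right]
  rcases lt_or_ge ν n with hν | hν
  · rw [show n - ν = n - (ν + 1) + 1 by omega]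
    ring
  · rw [Nat.choose_eq_zero_of_lt (by omega : n < ν + 1)]
    simp only [Nat.cast_zero, zero_mul, add_zero]
    ring

theorem binomialCDF_succ (n k : ℕ) :
    binomialCDF R (n + 1) k = binomialCDF R n k - X * bernsteinPolynomial R n k := by
  induction k with
  | zero =>
    simp only [binomialCDF, zero_add, range_one, sum_singleton, bernsteinPolynomial_succ_zero]
    ring
  | succ k ih =>
    rw [binomialCDF, sum_range_succ, ← binomialCDF, ih, bernsteinPolynomial_succ_succ,
      binomialCDF, binomialCDF, sum_range_succ _ (k + 1)]
    ring

theorem binomialCDF_succ_self (k : ℕ) : binomialCDF R (k + 1) k = 1 - X ^ (k + 1) := by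
  rw [binomialCDF_succ, binomialCDF, bernsteinPolynomial.sum]
  simp [bernsteinPolynomial, pow_succ']

theorem derivative_binomialCDF_succ (n k : ℕ) :
    derivative (binomialCDF R (n + 1) k) = -((n + 1) * bernsteinPolynomial R n k) := by
  induction k with
  | zero =>
    simp only [binomialCDF, zero_add, range_one, sum_singleton, bernsteinPolynomial.derivative_zero,
      Nat.cast_add, Nat.cast_one, add_tsub_cancel_right]
    ring
  | succ k ih =>
    rw [binomialCDF, sum_range_succ, derivative_add, ← binomialCDF, ih,
      bernsteinPolynomial.derivative_succ_aux]
    ring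

end CommRing

theorem pow_mul_pow_le_weighted_mean_pow {a b : ℝ} (ha : 0 ≤ a) (hb : 0 ≤ b) (i j : ℕ) :
    a ^ i * b ^ j ≤ ((i * a + j * b) / (i + j)) ^ (i + j) := by
  rcases Nat.eq_zero_or_pos (i + j) with hij | hij
  · simp [Nat.add_eq_zero_iff.mp hij]
  have hn : (0 : ℝ) < i + j := by exact_mod_cast hij
  have amgm := Real.geom_mean_le_arith_mean2_weighted (div_nonneg i.cast_nonneg hn.le)
    (div_nonneg j.cast_nonneg hn.le) ha hb (by field_simp)
  have hpow :
      a ^ i * b ^ j = (a ^ ((i : ℝ) / (i + j)) * b ^ ((j : ℝ) / (i + j))) ^ (i + j) := by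
    rw [mul_pow, ← Real.rpow_mul_natCast ha, ← Real.rpow_mul_natCast hb]
    push_cast
    rw [div_mul_cancel₀ _ hn.ne', div_mul_cancel₀ _ hn.ne', Real.rpow_natCast,
      Real.rpow_natCast]
  rw [hpow]
  refine pow_le_pow_left₀ (by positivity) (amgm.trans_eq ?_) _
  field_simp

theorem pow_mul_one_sub_pow_le {k j : ℕ} (hk : 0 < k) (hj : 0 < j) {t : ℝ} (ht₀ : 0 ≤ t)
    (ht₁ : t ≤ 1) :
    t ^ k * (1 - t) ^ j ≤ ((k : ℝ) / (k + j)) ^ k * ((j : ℝ) / (k + j)) ^ j := by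
  have hk' : (0 : ℝ) < k := by exact_mod_cast hk
  have hj' : (0 : ℝ) < j := by exact_mod_cast hj
  set p : ℝ := k / (k + j)
  set q : ℝ := j / (k + j)
  have hp : 0 < p := by positivity
  have hq : 0 < q := by positivity
  have amgm := pow_mul_pow_le_weighted_mean_pow (div_nonneg ht₀ hp.le)
    (div_nonneg (sub_nonneg.mpr ht₁) hq.le) k j
  have hmean : ((k : ℝ) * (t / p) + j * ((1 - t) / q)) / (k + j) = 1 := by
    simp only [p, q]
    field_simp
    ring
  rw [hmean, one_pow] at amgm
  calc t ^ k * (1 - t) ^ j = (t / p) ^ k * ((1 - t) / q) ^ j * (p ^ k * q ^ j) := by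
        rw [mul_mul_mul_comm, ← mul_pow, ← mul_pow, div_mul_cancel₀ _ hp.ne',
          div_mul_cancel₀ _ hq.ne']
    _ ≤ p ^ k * q ^ j := mul_le_of_le_one_left (by positivity) amgm

theorem monotone_div_succ_pow_succ : Monotone fun k : ℕ => ((k : ℝ) / (k + 1)) ^ (k + 1) := by
  refine monotone_nat_of_le_succ fun k => ?_
  have hk : (0 : ℝ) < k + 1 := k.cast_add_one_pos
  have amgm :=
    pow_mul_pow_le_weighted_mean_pow zero_le_one (div_nonneg k.cast_nonneg hk.le) 1 (k + 1)
  rw [one_pow, one_mul, add_comm 1 (k + 1)] at amgm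
  refine amgm.trans_eq (congrArg (· ^ (k + 1 + 1)) ?_)
  push_cast
  rw [mul_div_cancel₀ _ hk.ne']
  ring

theorem bernsteinPolynomial_eval_le_eval_div {n k : ℕ} (hk : 0 < k) (hkn : k < n) {t : ℝ}
    (ht₀ : 0 ≤ t) (ht₁ : t ≤ 1) :
    (bernsteinPolynomial ℝ n k).eval t ≤
      (bernsteinPolynomial ℝ n k).eval ((k : ℝ) / n) := by
  obtain ⟨j, rfl⟩ := Nat.exists_eq_add_of_lt hkn
  have hn : ((k + j + 1 : ℕ) : ℝ) = k + (j + 1 : ℕ) := by push_cast; ring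
  have hq : 1 - (k : ℝ) / (k + (j + 1 : ℕ)) = (j + 1 : ℕ) / (k + (j + 1 : ℕ)) := by
    field_simp
    ring
  simp only [bernsteinPolynomial, eval_mul, eval_natCast, eval_pow, eval_X, eval_sub, eval_one,
    show k + j + 1 - k = j + 1 by omega]
  rw [hn, hq, mul_assoc, mul_assoc]
  exact mul_le_mul_of_nonneg_left (pow_mul_one_sub_pow_le hk j.succ_pos ht₀ ht₁)
    (Nat.cast_nonneg _)

theorem binomialCDF_eval_div_succ_le {n k : ℕ} (hk : 0 < k) (hkn : k < n) :
    (binomialCDF ℝ (n + 1) k).eval ((k : ℝ) / (n + 1)) ≤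
      (binomialCDF ℝ n k).eval ((k : ℝ) / n) := by
  set p : ℝ := k / n
  set B := bernsteinPolynomial ℝ n k
  have hn : (0 : ℝ) < n := by exact_mod_cast hk.trans hkn
  have hp₁ : p ≤ 1 := div_le_one_of_le₀ (by exact_mod_cast hkn.le) hn.le
  have hp' : (k : ℝ) / (n + 1) ≤ p := div_le_div_of_nonneg_left k.cast_nonneg hn (by linarith)
  have hslope : ∀ x ∈ interior (Set.Icc (0 : ℝ) 1),
      -((n + 1) * B.eval p) ≤ deriv (binomialCDF ℝ (n + 1) k).eval x := by
    intro x hx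
    rw [interior_Icc] at hx
    rw [Polynomial.deriv, derivative_binomialCDF_succ]
    simp only [eval_neg, eval_mul, eval_add, eval_natCast, eval_one, neg_le_neg_iff]
    gcongr
    exact bernsteinPolynomial_eval_le_eval_div hk hkn hx.1.le hx.2.le
  have mvt := (convex_Icc (0 : ℝ) 1).mul_sub_le_image_sub_of_le_deriv
    (binomialCDF ℝ (n + 1) k).continuousOn (binomialCDF ℝ (n + 1) k).differentiableOn hslope
    _ ⟨by positivity, hp'.trans hp₁⟩ _ ⟨by positivity, hp₁⟩ hp'
  have hshift : ((n : ℝ) + 1) * (p - k / (n + 1)) = p := by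
    simp only [p]
    field_simp
    ring
  have hrec : (binomialCDF ℝ (n + 1) k).eval p = (binomialCDF ℝ n k).eval p - p * B.eval p := by
    rw [binomialCDF_succ, eval_sub, eval_mul, eval_X]
  linear_combination mvt + B.eval p * hshift + hrec

theorem binomialCDF_eval_div_le {n k : ℕ} (hk : 0 < k) (hkn : k < n) :
    (binomialCDF ℝ n k).eval ((k : ℝ) / n) ≤ 1 - ((k : ℝ) / (k + 1)) ^ (k + 1) := by
  induction n, hkn using Nat.le_induction with
  | base => simp [binomialCDF_succ_self]
  | succ n hkn ih =>
    push_cast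
    exact (binomialCDF_eval_div_succ_le hk hkn).trans ih

theorem binomial_le_bound_general (m k : ℕ) (hk₁ : 2 ≤ k) (hk₂ : k ≤ m - 1) :
    ∑ j ∈ Finset.Iic k,
        (m.choose j : ℝ) * ((k : ℝ) / m) ^ j * (1 - (k : ℝ) / m) ^ (m - j) ≤
      0.7152 := by
  have hcdf : ∑ j ∈ Finset.Iic k,
      (m.choose j : ℝ) * ((k : ℝ) / m) ^ j * (1 - (k : ℝ) / m) ^ (m - j) =
        (binomialCDF ℝ m k).eval ((k : ℝ) / m) := by
    simp [binomialCDF, bernsteinPolynomial, eval_finsetSum, Nat.range_succ_eq_Iic]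
  have hconst : (8 / 27 : ℝ) ≤ ((k : ℝ) / (k + 1)) ^ (k + 1) := by
    refine le_of_eq_of_le ?_ (monotone_div_succ_pow_succ hk₁)
    norm_num
  rw [hcdf]
  linarith [binomialCDF_eval_div_le (by omega : 0 < k) (by omega : k < m)]

/-- Corollary 2: for `m ≥ 2` and `2 ≤ k ≤ m - 1`,
`P_{X ~ B(m, k/m)}[X ≤ k] ≤ 0.7152`. -/
theorem binomial_le_bound (m k : ℕ) (hm : 2 ≤ m) (hk₁ : 2 ≤ k) (hk₂ : k ≤ m - 1) :
    ∑ j ∈ Finset.Iic k,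
        (m.choose j : ℝ) * ((k : ℝ) / m) ^ j * (1 - (k : ℝ) / m) ^ (m - j) ≤
      0.7152 :=
  binomial_le_bound_general m k hk₁ hk₂
end

section
/- The constant 1/4 in the lower bound is tight: for m = 2 and every real p with 1/2 < p ≤ 1, the probability that a B(2, p)-distributed random variable X satisfies X ≥ 2p equals p², and hence the infimum over all pairs (m, p) with m a positive integer and 1/m < p ≤ 1 of the probability P[X ≥ m·p] for X distributed as B(m, p) equals 1/4, and this infimum is not attained. -/
/-!
Let `k = ⌈m p⌉ ≥ 2`. The tail `P[X ≥ k]` is strictly increasing in `p`, so it exceeds its value at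
`p = (k - 1) / m`, which by the symmetry `X ↦ m - X` equals `1 - P[Y ≥ s]` for `Y ~ B(m, s / m)`,
`s = m + 1 - k`. The probability `P[B(n, s / n) ≥ s]` decreases in `n`: one more trial adds
`p · P[B(n, p) = s - 1]` to the tail, and by the mean value theorem and the log-concavity of
`t ^ (s - 1) (1 - t) ^ (n - s)` this is at most the growth of the tail from `s / (n + 1)` to
`s / n`; the comparison comes down to the monotonicity of `(1 + 1 / n) ^ n`. At `n = s + 1` the value is
`(2 s + 1) / ((s + 1) (1 + 1 / s) ^ s) ≤ 3 / 4`. For `m = 2` the tail is `p ^ 2`, which tends to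
`1 / 4` as `p → 1 / 2`.
-/

open Finset

noncomputable def binomTail (n k : ℕ) (p : ℝ) : ℝ :=
  ∑ j ∈ Icc k n, (n.choose j : ℝ) * p ^ j * (1 - p) ^ (n - j)

theorem binomTail_zero (n : ℕ) (p : ℝ) : binomTail n 0 p = 1 := by
  have h := add_pow p (1 - p) n
  rw [add_sub_cancel, one_pow, ← Nat.Ico_zero_eq_range, Ico_add_one_right_eq_Icc] at h
  exact (sum_congr rfl fun j _ => by ring).trans h.symm

theorem binomTail_add_binomTail_one_sub {n k : ℕ} (hk : k ≤ n + 1) (p : ℝ) :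
    binomTail n k p + binomTail n (n + 1 - k) (1 - p) = 1 := by
  have hreflect : binomTail n (n + 1 - k) (1 - p) =
      ∑ j ∈ Ico 0 k, (n.choose j : ℝ) * p ^ j * (1 - p) ^ (n - j) := by
    refine sum_nbij' (n - ·) (n - ·) ?_ ?_ ?_ ?_ ?_ <;> intro j hj <;>
      simp only [mem_Icc, mem_Ico] at *
    · omega
    · omega
    · omega
    · omega
    · rw [Nat.choose_symm hj.2, Nat.sub_sub_self hj.2, sub_sub_cancel]
      ring
  rw [hreflect, add_comm, binomTail, ← Ico_add_one_right_eq_Icc,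
    sum_Ico_consecutive _ (Nat.zero_le k) hk, Ico_add_one_right_eq_Icc, ← binomTail, binomTail_zero]

theorem hasDerivAt_binomTail {n k : ℕ} (hk : k ≤ n) (t : ℝ) :
    HasDerivAt (binomTail n k) (k * n.choose k * (t ^ (k - 1) * (1 - t) ^ (n - k))) t := by
  -- the `j`-th term has derivative `A j - A (j + 1)`, so the derivative of the sum telescopes
  set A : ℕ → ℝ := fun j => j * n.choose j * (t ^ (j - 1) * (1 - t) ^ (n - j))
  have hterm (j : ℕ) : HasDerivAt (fun p => (n.choose j : ℝ) * p ^ j * (1 - p) ^ (n - j))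
      (A j - A (j + 1)) t := by
    have h := ((hasDerivAt_pow j t).const_mul (n.choose j : ℝ)).fun_mul
      ((hasDerivAt_pow (n - j) (1 - t)).comp t ((hasDerivAt_id t).const_sub 1))
    have hchoose : ((j + 1 : ℕ) : ℝ) * n.choose (j + 1) = n.choose j * (n - j : ℕ) := by
      rw [mul_comm]; exact_mod_cast Nat.choose_succ_right_eq n j
    refine h.congr_deriv ?_
    show _ = _ - (((j + 1 : ℕ) : ℝ) * n.choose (j + 1) *
      (t ^ (j + 1 - 1) * (1 - t) ^ (n - (j + 1))))
    rw [hchoose, Nat.add_sub_cancel, Nat.sub_sub, Function.comp_apply]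
    ring
  have hsum := HasDerivAt.fun_sum (u := Icc k n) fun j _ => hterm j
  have htel : ∑ j ∈ Icc k n, (A j - A (j + 1)) = A k := by
    have hlast : A (n + 1) = 0 := by simp [A, Nat.choose_succ_self]
    have h := sum_Icc_sub hk A
    rw [hlast, zero_sub] at h
    rw [← neg_neg (A k), ← h, ← sum_neg_distrib]
    simp only [neg_sub]
  rwa [htel] at hsum

theorem exists_binomTail_sub_eq {n k : ℕ} (hk : k ≤ n) {a b : ℝ} (hab : a < b) :
    ∃ ξ ∈ Set.Ioo a b, binomTail n k b - binomTail n k a =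
      k * n.choose k * (ξ ^ (k - 1) * (1 - ξ) ^ (n - k)) * (b - a) := by
  obtain ⟨ξ, hξ, hslope⟩ := exists_hasDerivAt_eq_slope (binomTail n k) _ hab
    (fun x _ => (hasDerivAt_binomTail hk x).continuousAt.continuousWithinAt)
    (fun x _ => hasDerivAt_binomTail hk x)
  exact ⟨ξ, hξ, by rw [hslope, div_mul_cancel₀ _ (sub_ne_zero.2 hab.ne')]⟩

theorem binomTail_strictMonoOn {n k : ℕ} (hk : 0 < k) (hkn : k ≤ n) :
    StrictMonoOn (binomTail n k) (Set.Icc 0 1) := by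
  refine strictMonoOn_of_deriv_pos (convex_Icc 0 1)
    (fun x _ => (hasDerivAt_binomTail hkn x).continuousAt.continuousWithinAt) fun x hx => ?_
  obtain ⟨hx0, hx1⟩ : x ∈ Set.Ioo 0 1 := by rwa [interior_Icc] at hx
  have hx1' : 0 < 1 - x := sub_pos.2 hx1
  have hchoose : 0 < n.choose k := Nat.choose_pos hkn
  rw [(hasDerivAt_binomTail hkn x).deriv]
  positivity

theorem binomTail_succ_succ {n k : ℕ} (hk : k ≤ n) (t : ℝ) :
    binomTail (n + 1) (k + 1) t =
      binomTail n (k + 1) t + n.choose k * t ^ (k + 1) * (1 - t) ^ (n - k) := by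
  set b : ℕ → ℕ → ℝ := fun n j => n.choose j * t ^ j * (1 - t) ^ (n - j)
  have hrec (j : ℕ) : b (n + 1) (j + 1) = t * b n j + (1 - t) * b n (j + 1) := by
    simp only [b, Nat.choose_succ_succ, Nat.cast_add, Nat.add_sub_add_right]
    rcases lt_or_ge j n with hj | hj
    · rw [show n - j = n - (j + 1) + 1 by omega]
      ring
    · rw [Nat.choose_eq_zero_of_lt (by omega : n < j + 1)]
      ring
  have hpeel : binomTail n k t = b n k + binomTail n (k + 1) t := by
    rw [binomTail, Icc_eq_cons_Ioc hk, sum_cons, ← Icc_add_one_left_eq_Ioc]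
    rfl
  have hshift : ∑ j ∈ Icc k n, b n (j + 1) = binomTail n (k + 1) t := by
    calc ∑ j ∈ Icc k n, b n (j + 1) = ∑ j ∈ Icc (k + 1) (n + 1), b n j := by
          rw [← map_add_right_Icc, sum_map]
          rfl
      _ = binomTail n (k + 1) t := by
          rw [sum_Icc_succ_top (by omega : k + 1 ≤ n + 1)]
          simp [b, binomTail, Nat.choose_succ_self]
  calc binomTail (n + 1) (k + 1) t = ∑ j ∈ Icc k n, b (n + 1) (j + 1) := by
        rw [binomTail, ← map_add_right_Icc k n 1, sum_map]
        rfl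
    _ = t * binomTail n k t + (1 - t) * binomTail n (k + 1) t := by
        simp_rw [hrec, sum_add_distrib, ← mul_sum, hshift]
        rfl
    _ = _ := by
        rw [hpeel]
        ring

theorem monotone_one_add_inv_pow : Monotone fun n : ℕ => (1 + (n : ℝ)⁻¹) ^ n := by
  refine monotone_nat_of_le_succ fun n => ?_
  rcases Nat.eq_zero_or_pos n with rfl | hn
  · norm_num
  set x : ℝ := 1 + (n : ℝ)⁻¹
  set y : ℝ := 1 + ((n + 1 : ℕ) : ℝ)⁻¹
  have hx : 0 < x := by positivity
  have hn' : (0 : ℝ) < n := by exact_mod_cast hn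
  -- Bernoulli's inequality for `y / x = 1 - 1 / (n + 1) ^ 2`
  have hbernoulli : x⁻¹ ≤ (y / x) ^ (n + 1) := by
    have h := one_add_mul_le_pow (a := -(((n : ℝ) + 1) ^ 2)⁻¹) (by
      have : (((n : ℝ) + 1) ^ 2)⁻¹ ≤ 1 := inv_le_one_of_one_le₀ (by nlinarith)
      linarith) (n + 1)
    have hxinv : 1 + ((n + 1 : ℕ) : ℝ) * -(((n : ℝ) + 1) ^ 2)⁻¹ = x⁻¹ := by
      simp only [x]; push_cast; field_simp; ring
    have hratio : 1 + -(((n : ℝ) + 1) ^ 2)⁻¹ = y / x := by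
      simp only [x, y]; push_cast; field_simp; ring
    rwa [hxinv, hratio] at h
  calc x ^ n = x ^ (n + 1) * x⁻¹ := by rw [pow_succ, mul_inv_cancel_right₀ hx.ne']
    _ ≤ x ^ (n + 1) * (y / x) ^ (n + 1) := by gcongr
    _ = y ^ (n + 1) := by rw [← mul_pow, mul_div_cancel₀ _ hx.ne']

theorem concaveOn_log_pow_mul_one_sub_pow (i l : ℕ) :
    ConcaveOn ℝ (Set.Ioo 0 1) fun t => i * Real.log t + l * Real.log (1 - t) := by
  have hlog := strictConcaveOn_log_Ioi.concaveOn
  have hlog_one_sub : ConcaveOn ℝ (Set.Ioo 0 1) fun t => Real.log (1 - t) :=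
    (hlog.comp_affineMap (AffineMap.const ℝ ℝ (1 : ℝ) - AffineMap.id ℝ ℝ)).subset
      (fun t ht => by simp [ht.2]) (convex_Ioo 0 1)
  exact ((hlog.subset Set.Ioo_subset_Ioi_self (convex_Ioo 0 1)).smul (Nat.cast_nonneg i)).add
    (hlog_one_sub.smul (Nat.cast_nonneg l))

theorem min_le_pow_mul_one_sub_pow (i l : ℕ) {a b x : ℝ} (ha : 0 < a) (hx : x ∈ Set.Icc a b)
    (hb : b < 1) : min (a ^ i * (1 - a) ^ l) (b ^ i * (1 - b) ^ l) ≤ x ^ i * (1 - x) ^ l := by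
  have hsub : Set.Icc a b ⊆ Set.Ioo 0 1 := fun t ht => ⟨ha.trans_le ht.1, ht.2.trans_lt hb⟩
  have hexp {t : ℝ} (ht : t ∈ Set.Ioo 0 1) :
      t ^ i * (1 - t) ^ l = Real.exp (i * Real.log t + l * Real.log (1 - t)) := by
    rw [Real.exp_add, Real.exp_nat_mul, Real.exp_nat_mul, Real.exp_log ht.1,
      Real.exp_log (sub_pos.2 ht.2)]
  have hab : a ≤ b := hx.1.trans hx.2
  rw [hexp (hsub ⟨le_rfl, hab⟩), hexp (hsub ⟨hab, le_rfl⟩), hexp (hsub hx),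
    ← Real.exp_monotone.map_min, Real.exp_le_exp]
  exact (concaveOn_log_pow_mul_one_sub_pow i l).min_le_of_mem_Icc (hsub ⟨le_rfl, hab⟩)
    (hsub ⟨hab, le_rfl⟩) hx

theorem pow_mul_one_sub_pow_div_succ_le {k e : ℕ} {N : ℝ} (hN : N = k + e + 2) :
    N / (N + 1) * (((k + 1) / (N + 1)) ^ k * (1 - (k + 1) / (N + 1)) ^ (e + 1)) ≤
      ((k + 1) / N) ^ k * (1 - (k + 1) / N) ^ (e + 1) := by
  have hmono : (1 + ((e + 1 : ℕ) : ℝ)⁻¹) ^ (e + 1) ≤ (1 + ((k + e + 2 : ℕ) : ℝ)⁻¹) ^ (k + e + 2) :=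
    monotone_one_add_inv_pow (by omega : e + 1 ≤ k + e + 2)
  have hN0 : 0 < N := by rw [hN]; positivity
  have he1 : (1 + ((e + 1 : ℕ) : ℝ)⁻¹) = (e + 2) / (e + 1) := by push_cast; field_simp; ring
  have hN1 : (1 + ((k + e + 2 : ℕ) : ℝ)⁻¹) = (N + 1) / N := by rw [hN]; push_cast; field_simp
  rw [he1, hN1] at hmono
  have hq : 1 - (k + 1) / (N + 1) = (e + 2) / (N + 1) := by rw [hN]; field_simp; ring
  have hp : 1 - (k + 1) / N = (e + 1) / N := by rw [hN]; field_simp; ring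
  rw [hq, hp]
  calc N / (N + 1) * (((k + 1) / (N + 1)) ^ k * ((e + 2) / (N + 1)) ^ (e + 1))
      = (k + 1) ^ k * (e + 1) ^ (e + 1) / N ^ (k + e + 1) *
          (((e + 2) / (e + 1)) ^ (e + 1) * (N / (N + 1)) ^ (k + e + 2)) := by
        simp only [div_pow]
        field_simp
        ring
    _ ≤ (k + 1) ^ k * (e + 1) ^ (e + 1) / N ^ (k + e + 1) *
          (((N + 1) / N) ^ (k + e + 2) * (N / (N + 1)) ^ (k + e + 2)) := by gcongr
    _ = ((k + 1) / N) ^ k * ((e + 1) / N) ^ (e + 1) := by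
        rw [← mul_pow, div_mul_div_cancel₀ hN0.ne', div_self (by positivity), one_pow, mul_one]
        simp only [div_pow]
        field_simp
        ring

theorem binomTail_succ_div_le {s n : ℕ} (hs : 0 < s) (hsn : s < n) :
    binomTail (n + 1) s (s / (n + 1)) ≤ binomTail n s (s / n) := by
  obtain ⟨k, rfl⟩ : ∃ k, s = k + 1 := ⟨s - 1, by omega⟩
  obtain ⟨e, rfl⟩ : ∃ e, n = k + e + 2 := ⟨n - k - 2, by omega⟩
  set N : ℝ := ((k + e + 2 : ℕ) : ℝ)
  have hN : N = k + e + 2 := by push_cast [N]; rfl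
  have hN0 : 0 < N := by positivity
  set p : ℝ := ((k + 1 : ℕ) : ℝ) / N
  set q : ℝ := ((k + 1 : ℕ) : ℝ) / (N + 1)
  set f : ℝ → ℝ := fun t => t ^ k * (1 - t) ^ (e + 1)
  have hq0 : 0 < q := by positivity
  have hqp : q < p := div_lt_div_of_pos_left (by positivity) hN0 (lt_add_one N)
  have hp1 : p < 1 := by rw [div_lt_one hN0, hN]; push_cast; linarith
  obtain ⟨ξ, hξ, hmvt⟩ := exists_binomTail_sub_eq (by omega : k + 1 ≤ k + e + 2) hqp
  have hfq : 0 ≤ f q :=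
    mul_nonneg (pow_nonneg hq0.le _) (pow_nonneg (sub_nonneg.2 (hqp.trans hp1).le) _)
  -- `f` is log-concave, so on `[q, p]` it is smallest at an endpoint
  have hkey : N / (N + 1) * f q ≤ f ξ := by
    refine le_trans (le_min ?_ ?_) (min_le_pow_mul_one_sub_pow k (e + 1) hq0 ⟨hξ.1.le, hξ.2.le⟩ hp1)
    · exact mul_le_of_le_one_left hfq ((div_le_one (by positivity)).2 (by linarith))
    · simpa only [f, p, q, Nat.cast_add, Nat.cast_one] using pow_mul_one_sub_pow_div_succ_le hN
  have hchoose : ((k + 1 : ℕ) : ℝ) * (k + e + 2).choose (k + 1) =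
      (k + e + 2).choose k * (e + 2 : ℕ) := by
    have h := Nat.choose_succ_right_eq (k + e + 2) k
    rw [show k + e + 2 - k = e + 2 by omega] at h
    rw [mul_comm]
    exact_mod_cast h
  have hvar : q * (1 - q) = (e + 2 : ℕ) * (p - q) * (N / (N + 1)) := by
    simp only [p, q, hN]; push_cast; field_simp; ring
  rw [show k + 1 - 1 = k by omega, show k + e + 2 - (k + 1) = e + 1 by omega, hchoose] at hmvt
  rw [binomTail_succ_succ (by omega : k ≤ k + e + 2), show k + e + 2 - k = e + 1 + 1 by omega]
  have hterm :
      q ^ (k + 1) * (1 - q) ^ (e + 1 + 1) = (e + 2 : ℕ) * (p - q) * (N / (N + 1) * f q) := by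
    simp only [f]; rw [← mul_assoc, ← hvar]; ring
  calc binomTail (k + e + 2) (k + 1) q + (k + e + 2).choose k * q ^ (k + 1) * (1 - q) ^ (e + 1 + 1)
      ≤ binomTail (k + e + 2) (k + 1) q + (k + e + 2).choose k * ((e + 2 : ℕ) * (p - q) * f ξ) := by
        rw [mul_assoc, hterm]
        gcongr
    _ = binomTail (k + e + 2) (k + 1) p := by linear_combination -hmvt

theorem four_mul_two_mul_add_one_le {s : ℕ} (hs : 0 < s) :
    4 * (2 * s + 1) ≤ 3 * (s + 1) * (1 + (s : ℝ)⁻¹) ^ s := by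
  rcases lt_or_ge s 26 with hs26 | hs26
  · interval_cases s <;> norm_num
  · -- `(1 + 1/26) ^ 26` already exceeds `8 / 3`
    have h26 : (8 / 3 : ℝ) ≤ (1 + ((26 : ℕ) : ℝ)⁻¹) ^ 26 := by norm_num
    have := h26.trans (monotone_one_add_inv_pow hs26)
    nlinarith

theorem binomTail_succ_self_div_le {s : ℕ} (hs : 0 < s) :
    binomTail (s + 1) s (s / (s + 1)) ≤ 3 / 4 := by
  have hval :
      binomTail (s + 1) s (s / (s + 1)) = (2 * s + 1) / ((s + 1) * (1 + (s : ℝ)⁻¹) ^ s) := by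
    rw [binomTail, sum_Icc_succ_top (Nat.le_succ s), Icc_self, sum_singleton, Nat.choose_self,
      Nat.choose_succ_self_right, Nat.add_sub_cancel_left, Nat.sub_self]
    have hs' : (s : ℝ) ≠ 0 := by positivity
    rw [inv_eq_one_div, one_add_div hs']
    push_cast
    simp only [div_pow]
    field_simp
    ring
  have hpos : 0 < (s + 1) * (1 + (s : ℝ)⁻¹) ^ s := by positivity
  rw [hval, div_le_iff₀ hpos]
  linarith [four_mul_two_mul_add_one_le hs]

theorem binomTail_self_div_le {s n : ℕ} (hs : 0 < s) (hsn : s < n) :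
    binomTail n s (s / n) ≤ 3 / 4 := by
  have hanti : AntitoneOn (fun n : ℕ => binomTail n s (s / n)) {x | s + 1 ≤ x} :=
    antitoneOn_nat_Ici_of_succ_le fun n hn => by
      simpa only [Nat.cast_add, Nat.cast_one] using binomTail_succ_div_le hs hn
  calc binomTail n s (s / n) ≤ binomTail (s + 1) s (s / (s + 1 : ℕ)) :=
        hanti (le_refl (s + 1)) hsn hsn
    _ ≤ 3 / 4 := by simpa only [Nat.cast_add, Nat.cast_one] using binomTail_succ_self_div_le hs

theorem quarter_lt_binomTail_ceil {m : ℕ} {p : ℝ} (hmp : 1 < m * p) (hp : p ≤ 1) :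
    1 / 4 < binomTail m ⌈m * p⌉₊ p := by
  set k := ⌈(m : ℝ) * p⌉₊
  have hk : 1 < k := Nat.lt_ceil.2 (by exact_mod_cast hmp)
  have hp0 : 0 < p := pos_of_mul_pos_right (one_pos.trans hmp) (Nat.cast_nonneg m)
  have hkm : k ≤ m := Nat.ceil_le.2 (mul_le_of_le_one_right (Nat.cast_nonneg m) hp)
  have hm : (0 : ℝ) < m := by exact_mod_cast (by omega : 0 < m)
  set q : ℝ := ((k : ℝ) - 1) / m
  have hq0 : 0 ≤ q := div_nonneg (by linarith [(Nat.one_lt_cast (α := ℝ)).2 hk]) hm.le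
  have hqp : q < p := by
    rw [div_lt_iff₀ hm]
    linarith [Nat.ceil_lt_add_one (mul_pos hm hp0).le]
  have hcompl := binomTail_add_binomTail_one_sub (by omega : k ≤ m + 1) q
  rw [show 1 - q = ((m + 1 - k : ℕ) : ℝ) / m by
    simp only [q]; rw [Nat.cast_sub (by omega)]; push_cast; field_simp; ring] at hcompl
  have hupper := binomTail_self_div_le (by omega : 0 < m + 1 - k) (by omega : m + 1 - k < m)
  have hmono := binomTail_strictMonoOn (by omega) hkm ⟨hq0, hqp.le.trans hp⟩ ⟨hp0.le, hp⟩ hqp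
  linarith

theorem binomTail_two_ceil_two_mul {p : ℝ} (hp : 1 / 2 < p) (hp1 : p ≤ 1) :
    binomTail 2 ⌈2 * p⌉₊ p = p ^ 2 := by
  rw [(Nat.ceil_eq_iff two_ne_zero).2 ⟨by norm_num; linarith, by norm_num; linarith⟩]
  simp [binomTail]

def binomTailAtMeanSet : Set ℝ :=
  {x | ∃ (m : ℕ) (p : ℝ), 0 < m ∧ 1 / (m : ℝ) < p ∧ p ≤ 1 ∧ x = binomTail m ⌈m * p⌉₊ p}

theorem binomTailAtMeanSet_subset_Ioi : binomTailAtMeanSet ⊆ Set.Ioi (1 / 4) := by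
  rintro _ ⟨m, p, hm, hmp, hp, rfl⟩
  exact quarter_lt_binomTail_ceil ((div_lt_iff₀' (by exact_mod_cast hm)).1 hmp) hp

theorem Ioc_subset_binomTailAtMeanSet : Set.Ioc (1 / 4) 1 ⊆ binomTailAtMeanSet := by
  intro x ⟨hx, hx1⟩
  have hsqrt : 1 / 2 < √x := Real.lt_sqrt (by norm_num) |>.2 (by linarith)
  refine ⟨2, √x, two_pos, by norm_num; linarith, Real.sqrt_le_one.2 hx1, ?_⟩
  rw [Nat.cast_ofNat, binomTail_two_ceil_two_mul hsqrt (Real.sqrt_le_one.2 hx1),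
    Real.sq_sqrt (by linarith)]

/-- Tightness of the constant `1/4`: for `m = 2` and `1/2 < p ≤ 1`,
`P_{X ~ B(2,p)}[X ≥ 2p] = p²`; and the infimum over all pairs `(m, p)` with
`m` a positive integer and `1/m < p ≤ 1` of `P_{X ~ B(m,p)}[X ≥ m·p]` equals
`1/4` and is not attained. -/
theorem binomial_quarter_tight :
    (∀ p : ℝ, 1 / 2 < p → p ≤ 1 →
        ∑ j ∈ Finset.Icc ⌈(2 : ℝ) * p⌉₊ 2,
          ((Nat.choose 2 j : ℝ)) * p ^ j * (1 - p) ^ (2 - j) = p ^ 2) ∧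
      IsGLB
        {x : ℝ | ∃ (m : ℕ) (p : ℝ), 0 < m ∧ 1 / (m : ℝ) < p ∧ p ≤ 1 ∧
          x = ∑ j ∈ Finset.Icc ⌈(m : ℝ) * p⌉₊ m,
            (m.choose j : ℝ) * p ^ j * (1 - p) ^ (m - j)}
        (1 / 4) ∧
      (1 / 4 : ℝ) ∉
        {x : ℝ | ∃ (m : ℕ) (p : ℝ), 0 < m ∧ 1 / (m : ℝ) < p ∧ p ≤ 1 ∧
          x = ∑ j ∈ Finset.Icc ⌈(m : ℝ) * p⌉₊ m,
            (m.choose j : ℝ) * p ^ j * (1 - p) ^ (m - j)} :=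
  ⟨fun _ => binomTail_two_ceil_two_mul,
    (isGLB_Ioc (by norm_num)).of_subset_of_superset isGLB_Ioi Ioc_subset_binomTailAtMeanSet
      binomTailAtMeanSet_subset_Ioi,
    fun h => Set.self_notMem_Ioi (binomTailAtMeanSet_subset_Ioi h)⟩
end
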